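/- Let ζ and ζ_1, …, ζ_n be independent N(0, σ² I_d) random vectors in ℝ^d with σ² > 0, let β > 0, and let h_1, …, h_n be positive integers. Then E[exp(−β Σ_{j=1}^n h_j ‖ζ − ζ_j‖²)] = (σ²)^{−d/2} (1/σ² + Σ_{j=1}^n 2βh_j/(2βh_jσ² + 1))^{−d/2} ∏_{j=1}^n (2βh_jσ² + 1)^{−d/2}. -/

import Mathlib

/-!
Pass to the joint law, a product of copies of `N(0, σ² I_d)`. Completing the square shows
`E exp(-a‖ζ' - x₀‖²) = (2aσ² + 1)^{-d/2} exp(-a‖x₀‖² / (2aσ² + 1))` for `ζ' ~ N(0, σ² I_d)`, so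
integrating out `ζ_1, …, ζ_n` for fixed `ζ = x₀` leaves `∏_j (2βh_jσ² + 1)^{-d/2}` times
`exp(-A‖x₀‖²)` with `A = Σ_j βh_j / (2βh_jσ² + 1)`, and the same formula with `x₀ = 0`
integrates out `ζ`, giving the factor `(1 + 2Aσ²)^{-d/2} = (σ²)^{-d/2} (1/σ² + 2A)^{-d/2}`.
-/

open MeasureTheory ProbabilityTheory Real

noncomputable section

/-- Density of the centered isotropic Gaussian `N(0, σ² I_d)` on `ℝ^d`. -/
def gaussPdf (d : ℕ) (σ2 : ℝ) (x : EuclideanSpace ℝ (Fin d)) : ℝ :=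
  (2 * Real.pi * σ2) ^ (-(d : ℝ) / 2) * Real.exp (-‖x‖ ^ 2 / (2 * σ2))

/-- The centered isotropic Gaussian measure `N(0, σ² I_d)` on `ℝ^d`. -/
def gaussMeasure (d : ℕ) (σ2 : ℝ) : Measure (EuclideanSpace ℝ (Fin d)) :=
  volume.withDensity fun x => ENNReal.ofReal (gaussPdf d σ2 x)

end

section InnerProductSpace

variable {V : Type*} [NormedAddCommGroup V] [InnerProductSpace ℝ V]

theorem mul_norm_sub_sq_add_mul_norm_sq {a s : ℝ} (has : a + s ≠ 0) (x w : V) :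
    a * ‖x - w‖ ^ 2 + s * ‖x‖ ^ 2 =
      (a + s) * ‖x - (a / (a + s)) • w‖ ^ 2 + a * s / (a + s) * ‖w‖ ^ 2 := by
  rw [norm_sub_sq_real, norm_sub_sq_real, inner_smul_right, norm_smul, mul_pow,
    Real.norm_eq_abs, sq_abs]
  field_simp
  ring

variable [FiniteDimensional ℝ V] [MeasurableSpace V] [BorelSpace V]

theorem integral_exp_neg_mul_norm_sub_sq_mul_exp_neg_mul_norm_sq {a s : ℝ} (ha : 0 ≤ a)
    (hs : 0 < s) (w : V) :
    ∫ x : V, exp (-(a * ‖x - w‖ ^ 2)) * exp (-(s * ‖x‖ ^ 2)) =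
      (π / (a + s)) ^ (Module.finrank ℝ V / 2 : ℝ) * exp (-(a * s / (a + s) * ‖w‖ ^ 2)) := by
  have has : 0 < a + s := by positivity
  simp_rw [← exp_add, ← neg_add, mul_norm_sub_sq_add_mul_norm_sq has.ne', neg_add, exp_add]
  rw [integral_mul_const, integral_sub_right_eq_self (fun x => exp (-((a + s) * ‖x‖ ^ 2))),
    ← GaussianFourier.integral_rexp_neg_mul_sq_norm has]
  simp_rw [neg_mul]

end InnerProductSpace

theorem integral_gaussMeasure {d : ℕ} {σ2 : ℝ} (hσ2 : 0 ≤ σ2)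
    (f : EuclideanSpace ℝ (Fin d) → ℝ) :
    ∫ x, f x ∂gaussMeasure d σ2 = ∫ x, gaussPdf d σ2 x * f x := by
  have hpdf : Continuous (gaussPdf d σ2) := by unfold gaussPdf; fun_prop
  rw [gaussMeasure, integral_withDensity_eq_integral_toReal_smul
    hpdf.measurable.ennreal_ofReal (ae_of_all _ fun _ => ENNReal.ofReal_lt_top)]
  congr with x
  rw [ENNReal.toReal_ofReal (by unfold gaussPdf; positivity), smul_eq_mul]

theorem integral_exp_neg_mul_norm_sub_sq_gaussMeasure {d : ℕ} {σ2 a : ℝ} (hσ2 : 0 < σ2)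
    (ha : 0 ≤ a) (w : EuclideanSpace ℝ (Fin d)) :
    ∫ x, exp (-(a * ‖x - w‖ ^ 2)) ∂gaussMeasure d σ2 =
      (2 * a * σ2 + 1) ^ (-(d : ℝ) / 2) * exp (-(a / (2 * a * σ2 + 1) * ‖w‖ ^ 2)) := by
  have hs : 0 < 1 / (2 * σ2) := by positivity
  have hq : 0 < 2 * a * σ2 + 1 := by positivity
  have hintegrand : ∀ x : EuclideanSpace ℝ (Fin d), gaussPdf d σ2 x * exp (-(a * ‖x - w‖ ^ 2)) =
      (2 * π * σ2) ^ (-(d : ℝ) / 2) *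
        (exp (-(a * ‖x - w‖ ^ 2)) * exp (-(1 / (2 * σ2) * ‖x‖ ^ 2))) := fun x => by
    simp only [gaussPdf, one_div_mul_eq_div, neg_div]; ring
  simp_rw [integral_gaussMeasure hσ2.le, hintegrand, integral_const_mul,
    integral_exp_neg_mul_norm_sub_sq_mul_exp_neg_mul_norm_sq ha hs, finrank_euclideanSpace_fin]
  have hπ : π / (a + 1 / (2 * σ2)) = 2 * π * σ2 / (2 * a * σ2 + 1) := by field_simp
  have hexp : a * (1 / (2 * σ2)) / (a + 1 / (2 * σ2)) = a / (2 * a * σ2 + 1) := by field_simp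
  rw [hπ, hexp, ← mul_assoc, div_rpow (by positivity) hq.le, neg_div, rpow_neg (by positivity),
    rpow_neg hq.le]
  field_simp

theorem isProbabilityMeasure_gaussMeasure (d : ℕ) {σ2 : ℝ} (hσ2 : 0 < σ2) :
    IsProbabilityMeasure (gaussMeasure d σ2) := by
  have h := integral_exp_neg_mul_norm_sub_sq_gaussMeasure (d := d) hσ2 le_rfl 0
  norm_num at h
  have hfin : gaussMeasure d σ2 Set.univ ≠ ⊤ := by
    intro htop
    simp [measureReal_def, htop] at h
  exact ⟨by rw [← ENNReal.ofReal_toReal hfin, ← measureReal_def, h, ENNReal.ofReal_one]⟩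

theorem integral_pi_eq_integral_integral_fin_cons {E G : Type*} [MeasurableSpace E]
    [NormedAddCommGroup G] [NormedSpace ℝ G] (μ : Measure E) [SigmaFinite μ] {n : ℕ}
    {F : (Fin (n + 1) → E) → G} (hF : Integrable F (Measure.pi fun _ => μ)) :
    ∫ x, F x ∂Measure.pi (fun _ => μ) =
      ∫ x₀, ∫ y, F (Fin.cons x₀ y) ∂Measure.pi (fun _ => μ) ∂μ := by
  have he := (measurePreserving_piFinSuccAbove (fun _ : Fin (n + 1) => μ) 0).symm
  rw [← he.integral_comp', integral_prod _ (by exact he.integrable_comp_of_integrable hF)]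
  simp only [MeasurableEquiv.piFinSuccAbove_symm_apply, Fin.insertNthEquiv, Equiv.coe_fn_mk,
    Fin.insertNth_zero']

theorem integral_exp_neg_sum_mul_norm_sub_sq_pi_gaussMeasure {d n : ℕ} {σ2 : ℝ} (hσ2 : 0 < σ2)
    {a : Fin n → ℝ} (ha : ∀ j, 0 ≤ a j) :
    ∫ x, exp (-∑ j, a j * ‖x 0 - x j.succ‖ ^ 2)
        ∂Measure.pi (fun _ : Fin (n + 1) => gaussMeasure d σ2) =
      (1 + 2 * σ2 * ∑ j, a j / (2 * a j * σ2 + 1)) ^ (-(d : ℝ) / 2) *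
        ∏ j, (2 * a j * σ2 + 1) ^ (-(d : ℝ) / 2) := by
  have := isProbabilityMeasure_gaussMeasure d hσ2
  set A := ∑ j, a j / (2 * a j * σ2 + 1)
  have hA : 0 ≤ A := Finset.sum_nonneg fun j _ => by have := ha j; positivity
  have hint : Integrable (fun x : Fin (n + 1) → EuclideanSpace ℝ (Fin d) =>
      exp (-∑ j, a j * ‖x 0 - x j.succ‖ ^ 2)) (Measure.pi fun _ => gaussMeasure d σ2) := by
    refine .of_bound (by fun_prop) 1 (ae_of_all _ fun x => ?_)
    rw [norm_of_nonneg (exp_nonneg _), exp_le_one_iff, neg_nonpos]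
    exact Finset.sum_nonneg fun j _ => mul_nonneg (ha j) (sq_nonneg _)
  have hinner : ∀ x₀ : EuclideanSpace ℝ (Fin d),
      ∫ y, exp (-∑ j, a j * ‖x₀ - y j‖ ^ 2) ∂Measure.pi (fun _ => gaussMeasure d σ2) =
        (∏ j, (2 * a j * σ2 + 1) ^ (-(d : ℝ) / 2)) * exp (-(A * ‖x₀‖ ^ 2)) := fun x₀ => by
    simp_rw [← Finset.sum_neg_distrib, exp_sum, norm_sub_rev x₀]
    rw [integral_fintype_prod_eq_prod (fun j y => exp (-(a j * ‖y - x₀‖ ^ 2)))]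
    simp_rw [integral_exp_neg_mul_norm_sub_sq_gaussMeasure hσ2 (ha _)]
    rw [Finset.prod_mul_distrib, ← exp_sum, Finset.sum_neg_distrib, ← Finset.sum_mul]
  rw [integral_pi_eq_integral_integral_fin_cons _ hint]
  simp only [Fin.cons_zero, Fin.cons_succ, hinner]
  have hout :
      ∫ x, exp (-(A * ‖x‖ ^ 2)) ∂gaussMeasure d σ2 = (1 + 2 * σ2 * A) ^ (-(d : ℝ) / 2) := by
    simpa [add_comm, mul_right_comm] using
      integral_exp_neg_mul_norm_sub_sq_gaussMeasure (w := 0) hσ2 hA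
  rw [integral_const_mul, hout, mul_comm]

theorem statement7_general {Ω : Type} [MeasurableSpace Ω] (P : Measure Ω) [IsProbabilityMeasure P]
    (d n : ℕ) (σ2 β : ℝ) (hσ2 : 0 < σ2) (hβ : 0 < β)
    (g : Fin (n + 1) → Ω → EuclideanSpace ℝ (Fin d))
    (hind : iIndepFun g P)
    (hlaw : ∀ j, P.map (g j) = gaussMeasure d σ2)
    (h : Fin n → ℕ) :
    ∫ ω, Real.exp (-β * ∑ j, (h j : ℝ) * ‖g 0 ω - g j.succ ω‖ ^ 2) ∂P =
      σ2 ^ (-(d : ℝ) / 2) *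
        (1 / σ2 + ∑ j, 2 * β * (h j : ℝ) / (2 * β * (h j : ℝ) * σ2 + 1)) ^ (-(d : ℝ) / 2) *
        ∏ j, (2 * β * (h j : ℝ) * σ2 + 1) ^ (-(d : ℝ) / 2) := by
  have := isProbabilityMeasure_gaussMeasure d hσ2
  have hg : ∀ j, AEMeasurable (g j) P := fun j => .of_map_ne_zero (hlaw j ▸ NeZero.ne _)
  have hsum : ∀ x : Fin (n + 1) → EuclideanSpace ℝ (Fin d),
      -β * ∑ j, (h j : ℝ) * ‖x 0 - x j.succ‖ ^ 2 =
        -∑ j, β * h j * ‖x 0 - x j.succ‖ ^ 2 := fun x => by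
    simp only [neg_mul, Finset.mul_sum, mul_assoc, Finset.sum_neg_distrib]
  rw [← integral_map (f := fun x => exp (-β * ∑ j, (h j : ℝ) * ‖x 0 - x j.succ‖ ^ 2))
    (aemeasurable_pi_lambda _ hg) (by fun_prop), hind.map_fun_eq_pi_map hg]
  simp_rw [hlaw, hsum]
  rw [integral_exp_neg_sum_mul_norm_sub_sq_pi_gaussMeasure hσ2 fun j => by positivity,
    ← mul_rpow hσ2.le (by positivity)]
  simp only [← mul_assoc]
  congr 2
  rw [mul_add, mul_one_div_cancel hσ2.ne', Finset.mul_sum, Finset.mul_sum]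
  exact congrArg _ (Finset.sum_congr rfl fun j _ => by ring)

/-- If `ζ, ζ_1, …, ζ_n` are independent `N(0, σ² I_d)` random vectors in
`ℝ^d` with `σ² > 0`, `β > 0`, and `h_1, …, h_n` are positive integers, then
`E[exp(-β Σ_j h_j ‖ζ - ζ_j‖²)]
  = (σ²)^{-d/2} (1/σ² + Σ_j 2βh_j/(2βh_jσ² + 1))^{-d/2} Π_j (2βh_jσ² + 1)^{-d/2}`.
Here `ζ = g 0` and `ζ_j = g j.succ`. -/
theorem statement7 {Ω : Type} [MeasurableSpace Ω] (P : Measure Ω) [IsProbabilityMeasure P]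
    (d n : ℕ) (σ2 β : ℝ) (hσ2 : 0 < σ2) (hβ : 0 < β)
    (g : Fin (n + 1) → Ω → EuclideanSpace ℝ (Fin d))
    (hind : iIndepFun g P)
    (hlaw : ∀ j, P.map (g j) = gaussMeasure d σ2)
    (h : Fin n → ℕ) (hpos : ∀ j, 0 < h j) :
    ∫ ω, Real.exp (-β * ∑ j, (h j : ℝ) * ‖g 0 ω - g j.succ ω‖ ^ 2) ∂P =
      σ2 ^ (-(d : ℝ) / 2) *
        (1 / σ2 + ∑ j, 2 * β * (h j : ℝ) / (2 * β * (h j : ℝ) * σ2 + 1)) ^ (-(d : ℝ) / 2) *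
        ∏ j, (2 * β * (h j : ℝ) * σ2 + 1) ^ (-(d : ℝ) / 2) :=
  statement7_general P d n σ2 β hσ2 hβ g hind hlaw h
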